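/- Let G = ([n], E) be a DAG and let i ≠ j be vertices and K ⊆ [n] ∖ {i,j} a set such that K does not d-separate i from j in G. If T and T' are two distinct trek systems from {i} ∪ K to {j} ∪ K, each with no sided intersection, whose trek system monomials in R satisfy m_T = m_{T'}, then there exists a trek system T'' from {i} ∪ K to {j} ∪ K with no sided intersection such that m_{T''} ≠ m_T. -/

import Mathlib

open Matrix MvPolynomial

namespace CI

/-- A directed acyclic graph on vertex set `Fin n`. -/
structure DAG (n : ℕ) where
  E : Finset (Fin n × Fin n)
  acyclic : ∀ v : Fin n, ¬ Relation.TransGen (fun a b => (a, b) ∈ E) v v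

variable {n : ℕ}

/-- `d` is a descendant of `v` (every vertex is a descendant of itself). -/
def DAG.desc (G : DAG n) (v d : Fin n) : Prop :=
  Relation.ReflTransGen (fun a b => (a, b) ∈ G.E) v d

/-- An (undirected) path in a DAG from `i` to `j`, encoded by its length and a
vertex function which is constant past the end of the path. -/
structure GPath (G : DAG n) (i j : Fin n) where
  len : ℕ
  v : ℕ → Fin n
  start_eq : v 0 = i
  end_eq : v len = j
  inj : ∀ s t : ℕ, s ≤ len → t ≤ len → v s = v t → s = t
  adj : ∀ t : ℕ, t < len → (v t, v (t + 1)) ∈ G.E ∨ (v (t + 1), v t) ∈ G.E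
  stable : ∀ t : ℕ, len ≤ t → v t = v len

namespace GPath

variable {G : DAG n} {i j : Fin n}

/-- The interior vertex at position `t` is a collider on the path. -/
def IsCollider (p : GPath G i j) (t : ℕ) : Prop :=
  0 < t ∧ t < p.len ∧ (p.v (t - 1), p.v t) ∈ G.E ∧ (p.v (t + 1), p.v t) ∈ G.E

/-- `x` lies on the path `p`. -/
def onPath (p : GPath G i j) (x : Fin n) : Prop := ∃ t ≤ p.len, p.v t = x

/-- The path `p` is d-connecting given `K`. -/
def DConn (p : GPath G i j) (K : Finset (Fin n)) : Prop :=
  (∀ t : ℕ, 0 < t → t < p.len → ¬ p.IsCollider t → p.v t ∉ K) ∧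
  (∀ t : ℕ, p.IsCollider t → ∃ d ∈ K, G.desc (p.v t) d)

end GPath

/-- `K` d-separates `i` and `j` in `G`. -/
def DAG.dSep (G : DAG n) (i j : Fin n) (K : Finset (Fin n)) : Prop :=
  ∀ p : GPath G i j, ¬ p.DConn K

/-- `C` d-separates the sets `A` and `B` in `G`. -/
def DAG.dSepSets (G : DAG n) (A B C : Finset (Fin n)) : Prop :=
  ∀ a ∈ A, ∀ b ∈ B, ∀ p : GPath G a b, ¬ p.DConn C

/-- The parameterization `φ_G(Λ, Ω) = (I - Λ)^{-T} Ω (I - Λ)^{-1}`. -/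
noncomputable def phi (Λ : Matrix (Fin n) (Fin n) ℝ) (ω : Fin n → ℝ) :
    Matrix (Fin n) (Fin n) ℝ :=
  ((1 - Λ)⁻¹)ᵀ * Matrix.diagonal ω * (1 - Λ)⁻¹

/-- `(Λ, ω)` is a valid parameter for the DAG `G`. -/
def IsParam (G : DAG n) (Λ : Matrix (Fin n) (Fin n) ℝ) (ω : Fin n → ℝ) : Prop :=
  (∀ a b : Fin n, (a, b) ∉ G.E → Λ a b = 0) ∧ ∀ a : Fin n, 0 < ω a

/-- The Gaussian DAG model `M_G`: the image of `φ_G` over the parameter space. -/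
def gaussianModel (G : DAG n) : Set (Matrix (Fin n) (Fin n) ℝ) :=
  { M | ∃ Λ ω, IsParam G Λ ω ∧ M = phi Λ ω }

/-- The determinant of the submatrix of `M` with rows `A` and columns `B`
(in the increasing order of indices); junk value `0` if `A` and `B` have
different cardinality. -/
noncomputable def subDet {α : Type} [CommRing α] (M : Matrix (Fin n) (Fin n) α)
    (A B : Finset (Fin n)) : α :=
  if h : B.card = A.card then
    Matrix.det (Matrix.of fun p q : Fin A.card =>
      M ((A.orderIsoOfFin rfl p).1) ((B.orderIsoOfFin h q).1))
  else 0

/-- The model `M_{G, i ⊥⊥ j | K}`. -/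
noncomputable def modelCI (G : DAG n) (i j : Fin n) (K : Finset (Fin n)) :
    Set (Matrix (Fin n) (Fin n) ℝ) :=
  { M | M ∈ gaussianModel G ∧ subDet M (insert i K) (insert j K) = 0 }

/-- The polynomial ring `R` in the variables `λ_{ab}` ((a,b) ∈ E) and `ω_a`. -/
abbrev PolyR (n : ℕ) := MvPolynomial (Fin n × Fin n ⊕ Fin n) ℝ

/-- The matrix `L` of indeterminates `λ_{ab}` for edges `(a,b) ∈ E`. -/
noncomputable def Lmat (G : DAG n) : Matrix (Fin n) (Fin n) (PolyR n) :=
  Matrix.of fun a b => if (a, b) ∈ G.E then X (Sum.inl (a, b)) else 0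

/-- The matrix of polynomials `S = (I - L)^{-T} W (I - L)^{-1}`. -/
noncomputable def Smat (G : DAG n) : Matrix (Fin n) (Fin n) (PolyR n) :=
  ((1 - Lmat G)⁻¹)ᵀ * Matrix.diagonal (fun a => X (Sum.inr a)) * (1 - Lmat G)⁻¹

/-- Evaluation of a polynomial in `R` at a parameter point `(Λ, ω)`. -/
noncomputable def evalParam (Λ : Matrix (Fin n) (Fin n) ℝ) (ω : Fin n → ℝ) :
    PolyR n →+* ℝ :=
  MvPolynomial.eval (Sum.elim (fun e : Fin n × Fin n => Λ e.1 e.2) ω)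

/-- `p` is a monomial: a nonzero scalar multiple of a single power product. -/
def IsMonomial (p : PolyR n) : Prop := p.support.card = 1

/-- A directed path in a DAG from `s` to `t`, encoded as for `GPath`. -/
structure DiPath (G : DAG n) (s t : Fin n) where
  len : ℕ
  v : ℕ → Fin n
  start_eq : v 0 = s
  end_eq : v len = t
  inj : ∀ a b : ℕ, a ≤ len → b ≤ len → v a = v b → a = b
  adj : ∀ a : ℕ, a < len → (v a, v (a + 1)) ∈ G.E
  stable : ∀ a : ℕ, len ≤ a → v a = v len

namespace DiPath

variable {G : DAG n} {s t : Fin n}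

/-- `x` lies on the directed path `p`. -/
def onPath (p : DiPath G s t) (x : Fin n) : Prop := ∃ a ≤ p.len, p.v a = x

/-- The directed path `p` traverses the edge `e`. -/
def hasEdge (p : DiPath G s t) (e : Fin n × Fin n) : Prop :=
  ∃ a < p.len, p.v a = e.1 ∧ p.v (a + 1) = e.2

end DiPath

/-- A trek: a pair of directed paths with a common top vertex. -/
structure Trek (G : DAG n) where
  top : Fin n
  left : Fin n
  right : Fin n
  L : DiPath G top left
  R : DiPath G top right

/-- The trek `trk` traverses the edge `e` (on its left or right part). -/
def Trek.hasEdge {G : DAG n} (trk : Trek G) (e : Fin n × Fin n) : Prop :=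
  trk.L.hasEdge e ∨ trk.R.hasEdge e

/-- A trek system from `A` to `B`: a set of treks whose left endpoints exhaust `A`
and whose right endpoints exhaust `B`. -/
def IsTrekSystem (G : DAG n) (A B : Finset (Fin n)) (T : Set (Trek G)) : Prop :=
  Set.BijOn (fun trk => trk.left) T ↑A ∧ Set.BijOn (fun trk => trk.right) T ↑B

/-- The trek system `T` has no sided intersection. -/
def NoSidedIntersection {G : DAG n} (T : Set (Trek G)) : Prop :=
  (∀ t₁ ∈ T, ∀ t₂ ∈ T, t₁ ≠ t₂ → ∀ x : Fin n, t₁.L.onPath x → ¬ t₂.L.onPath x) ∧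
  (∀ t₁ ∈ T, ∀ t₂ ∈ T, t₁ ≠ t₂ → ∀ x : Fin n, t₁.R.onPath x → ¬ t₂.R.onPath x)

/-- The product of the edge variables traversed by a directed path. -/
noncomputable def diMon {G : DAG n} {s t : Fin n} (p : DiPath G s t) : PolyR n :=
  ∏ a ∈ Finset.range p.len, X (Sum.inl (p.v a, p.v (a + 1)))

/-- The trek monomial `m_T = ω_s ∏ λ_{kl}`. -/
noncomputable def trekMon {G : DAG n} (trk : Trek G) : PolyR n :=
  X (Sum.inr trk.top) * diMon trk.L * diMon trk.R

/-- The trek system monomial: product of the trek monomials of its treks. -/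
noncomputable def trekSysMon {G : DAG n} (T : Set (Trek G)) : PolyR n :=
  ∏ᶠ trk ∈ T, trekMon trk

/-- Partial covariance `σ_{x,a·B}`. -/
noncomputable def pCov (M : Matrix (Fin n) (Fin n) ℝ) (x a : Fin n)
    (B : Finset (Fin n)) : ℝ :=
  M x a - ∑ p : {b : Fin n // b ∈ B}, ∑ q : {b : Fin n // b ∈ B},
      M x p.1 *
        (M.submatrix (fun b : {b : Fin n // b ∈ B} => b.1)
          (fun b : {b : Fin n // b ∈ B} => b.1))⁻¹ p q *
      M q.1 a

/-- Partial correlation `ρ_{x,a·B}`. -/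
noncomputable def pCor (M : Matrix (Fin n) (Fin n) ℝ) (x a : Fin n)
    (B : Finset (Fin n)) : ℝ :=
  pCov M x a B / Real.sqrt (pCov M x x B * pCov M a a B)

/-- The DAG obtained by deleting the edge `(a, b)`. -/
def DAG.deleteEdge (G : DAG n) (a b : Fin n) : DAG n where
  E := G.E.erase (a, b)
  acyclic := fun v hv =>
    G.acyclic v (Relation.TransGen.mono (r := fun a' b' => (a', b') ∈ G.E.erase (a, b))
      (fun _ _ hxy => Finset.mem_of_mem_erase hxy) v v hv)

/-- The Gaussian CI statement `A ⊥⊥_Σ B | C`: all `(|C|+1) × (|C|+1)` minors of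
the submatrix with rows `A ∪ C` and columns `B ∪ C` vanish. -/
noncomputable def ciHolds (M : Matrix (Fin n) (Fin n) ℝ)
    (A B C : Finset (Fin n)) : Prop :=
  ∀ A' B' : Finset (Fin n), A' ⊆ A ∪ C → B' ⊆ B ∪ C →
    A'.card = C.card + 1 → B'.card = C.card + 1 → subDet M A' B' = 0

/-- A set of CI statements over `[4]` is gaussoid-closed. -/
def GaussoidClosed (𝒢 : Fin 4 → Fin 4 → Finset (Fin 4) → Prop) : Prop :=
  (∀ a b C, 𝒢 a b C → 𝒢 b a C) ∧
  ∀ i j k : Fin 4, ∀ L : Finset (Fin 4),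
    i ≠ j → i ≠ k → j ≠ k → i ∉ L → j ∉ L → k ∉ L →
      ((𝒢 i j L → 𝒢 i k (insert j L) → 𝒢 i k L ∧ 𝒢 i j (insert k L)) ∧
       (𝒢 i j (insert k L) → 𝒢 i k (insert j L) → 𝒢 i j L ∧ 𝒢 i k L) ∧
       (𝒢 i j L → 𝒢 i k L → 𝒢 i j (insert k L) ∧ 𝒢 i k (insert j L)) ∧
       (𝒢 i j L → 𝒢 i j (insert k L) → 𝒢 i k L ∨ 𝒢 j k L))

end CI

namespace CI

section Helpers

variable {n : ℕ} {G : DAG n}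

lemma DiPath.ext' {s t : Fin n} {p q : DiPath G s t} (h1 : p.len = q.len)
    (h2 : p.v = q.v) : p = q := by
  cases p; cases q; dsimp at h1 h2; subst h1; subst h2; rfl

lemma Trek.ext' {t t' : Trek G} (h1 : t.top = t'.top)
    (h2 : t.L.len = t'.L.len) (h3 : t.L.v = t'.L.v)
    (h4 : t.R.len = t'.R.len) (h5 : t.R.v = t'.R.v) : t = t' := by
  obtain ⟨s, l, r, L, R⟩ := t
  obtain ⟨s', l', r', L', R'⟩ := t'
  dsimp at h1 h2 h3 h4 h5
  have hl : l = l' := by rw [← L.end_eq, ← L'.end_eq, h3, h2]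
  have hr : r = r' := by rw [← R.end_eq, ← R'.end_eq, h5, h4]
  subst h1; subst hl; subst hr
  have : L = L' := DiPath.ext' h2 h3
  have : R = R' := DiPath.ext' h4 h5
  simp_all

/-- Change the (propositionally equal) start vertex of a directed path. -/
def DiPath.retop {s s' t : Fin n} (p : DiPath G s t) (h : s = s') :
    DiPath G s' t :=
  ⟨p.len, p.v, h ▸ p.start_eq, p.end_eq, p.inj, p.adj, p.stable⟩

/-- The mixed trek: left path of `t`, right path of `t'` (same top). -/
def Trek.mix (t t' : Trek G) (h : t'.top = t.top) : Trek G :=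
  ⟨t.top, t.left, t'.right, t.L, t'.R.retop h⟩

/-- The exponent vector of the edge variables along a directed path. -/
noncomputable def pathDeg {s t : Fin n} (p : DiPath G s t) :
    (Fin n × Fin n ⊕ Fin n) →₀ ℕ :=
  ∑ a ∈ Finset.range p.len, Finsupp.single (Sum.inl (p.v a, p.v (a + 1))) 1

/-- The exponent vector of a trek monomial. -/
noncomputable def trekDeg (t : Trek G) : (Fin n × Fin n ⊕ Fin n) →₀ ℕ :=
  Finsupp.single (Sum.inr t.top) 1 + pathDeg t.L + pathDeg t.R

lemma prod_monomial {α : Type*} (s : Finset α)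
    (d : α → ((Fin n × Fin n ⊕ Fin n) →₀ ℕ)) :
    (∏ a ∈ s, (monomial (d a) (1 : ℝ) : PolyR n)) =
      monomial (∑ a ∈ s, d a) 1 := by
  classical
  induction s using Finset.induction_on with
  | empty => simp
  | @insert a s hnotmem ih =>
      rw [Finset.prod_insert hnotmem, Finset.sum_insert hnotmem, ih,
        monomial_mul, one_mul]

lemma diMon_eq {s t : Fin n} (p : DiPath G s t) :
    diMon p = monomial (pathDeg p) (1 : ℝ) := by
  have : ∀ a : ℕ, (X (Sum.inl (p.v a, p.v (a + 1))) : PolyR n) =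
      monomial (Finsupp.single (Sum.inl (p.v a, p.v (a + 1))) 1) 1 :=
    fun a => rfl
  rw [diMon]
  simp_rw [this]
  rw [prod_monomial, pathDeg]

lemma trekMon_eq (t : Trek G) :
    trekMon t = monomial (trekDeg t) (1 : ℝ) := by
  rw [trekMon, diMon_eq, diMon_eq, trekDeg]
  have hX : (X (Sum.inr t.top) : PolyR n) =
      monomial (Finsupp.single (Sum.inr t.top) 1) 1 := rfl
  rw [hX, monomial_mul, monomial_mul]
  simp

lemma pathDeg_inr {s t : Fin n} (p : DiPath G s t) (x : Fin n) :
    pathDeg p (Sum.inr x) = 0 := by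
  rw [pathDeg, Finsupp.finset_sum_apply]
  refine Finset.sum_eq_zero fun a _ => ?_
  simp [Finsupp.single_apply]

lemma trekDeg_inr (t : Trek G) (x : Fin n) :
    trekDeg t (Sum.inr x) = if t.top = x then 1 else 0 := by
  rw [trekDeg]
  simp [pathDeg_inr, Finsupp.single_apply]

lemma trekDeg_inl (t : Trek G) (e : Fin n × Fin n) :
    trekDeg t (Sum.inl e) = pathDeg t.L (Sum.inl e) + pathDeg t.R (Sum.inl e) := by
  rw [trekDeg]
  simp [Finsupp.single_apply]

lemma pathDeg_inl_ne_zero {s t : Fin n} (p : DiPath G s t) (e : Fin n × Fin n) :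
    pathDeg p (Sum.inl e) ≠ 0 ↔ p.hasEdge e := by
  rw [pathDeg, Finsupp.finset_sum_apply]
  rw [Ne, Finset.sum_eq_zero_iff]
  push_neg
  constructor
  · rintro ⟨a, ha, hne⟩
    refine ⟨a, Finset.mem_range.1 ha, ?_, ?_⟩ <;>
    · simp only [Finsupp.single_apply] at hne
      split_ifs at hne with h
      · rcases Sum.inl.inj h with h'
        simp [← h']
      · simp at hne
  · rintro ⟨a, ha, h1, h2⟩
    refine ⟨a, Finset.mem_range.2 ha, ?_⟩
    have : (p.v a, p.v (a + 1)) = e := Prod.ext h1 h2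
    simp [this, Finsupp.single_apply]


lemma mix_L (t t' : Trek G) (h : t'.top = t.top) : (t.mix t' h).L = t.L := rfl

lemma mix_R_onPath (t t' : Trek G) (h : t'.top = t.top) (x : Fin n) :
    (t.mix t' h).R.onPath x ↔ t'.R.onPath x := Iff.rfl

lemma trekDeg_mix (t t' : Trek G) (h : t'.top = t.top) :
    trekDeg (t.mix t' h) =
      Finsupp.single (Sum.inr t.top) 1 + pathDeg t.L + pathDeg t'.R := rfl

/-- Rigidity of disjoint path families. -/
lemma rig {ι : Type*} (T T' : Set ι) (top : ι → Fin n) (len : ι → ℕ)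
    (v : ι → ℕ → Fin n)
    (hstart : ∀ u, v u 0 = top u)
    (hinj : ∀ u, ∀ a b, a ≤ len u → b ≤ len u → v u a = v u b → a = b)
    (hstable : ∀ u, ∀ a, len u ≤ a → v u a = v u (len u))
    (hdisj : ∀ u₁ ∈ T, ∀ u₂ ∈ T, u₁ ≠ u₂ → ∀ x : Fin n,
      (∃ a ≤ len u₁, v u₁ a = x) → ¬ (∃ a ≤ len u₂, v u₂ a = x))
    (hdisj' : ∀ u₁ ∈ T', ∀ u₂ ∈ T', u₁ ≠ u₂ → ∀ x : Fin n,
      (∃ a ≤ len u₁, v u₁ a = x) → ¬ (∃ a ≤ len u₂, v u₂ a = x))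
    (hE : ∀ e : Fin n × Fin n,
      (∃ u ∈ T, ∃ a < len u, v u a = e.1 ∧ v u (a + 1) = e.2) ↔
      (∃ u ∈ T', ∃ a < len u, v u a = e.1 ∧ v u (a + 1) = e.2))
    {t t' : ι} (ht : t ∈ T) (ht' : t' ∈ T') (htop : top t = top t') :
    len t = len t' ∧ ∀ a, v t a = v t' a := by
  have Q : ∀ a, a ≤ len t → a ≤ len t' → v t a = v t' a := by
    intro a
    induction a with
    | zero => intro _ _; rw [hstart, hstart, htop]
    | succ a ih =>
        intro h1 h2
        have ha1 : a ≤ len t := Nat.le_of_succ_le h1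
        have ha2 : a ≤ len t' := Nat.le_of_succ_le h2
        have hx : v t a = v t' a := ih ha1 ha2
        obtain ⟨u, hu, b, hb, hb1, hb2⟩ :=
          (hE (v t a, v t (a + 1))).1 ⟨t, ht, a, h1, rfl, rfl⟩
        have hu_eq : u = t' := by
          by_contra hne
          exact hdisj' u hu t' ht' hne (v t' a)
            ⟨b, hb.le, by rw [hb1, hx]⟩ ⟨a, ha2, rfl⟩
        rw [hu_eq] at hb hb1 hb2
        have hba : b = a := hinj t' b a hb.le ha2 (by rw [hb1, hx])
        rw [hba] at hb2
        exact hb2.symm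
  have hle : len t ≤ len t' := by
    by_contra h
    push_neg at h
    obtain ⟨u, hu, b, hb, hb1, hb2⟩ :=
      (hE (v t (len t'), v t (len t' + 1))).1 ⟨t, ht, len t', h, rfl, rfl⟩
    have hu_eq : u = t' := by
      by_contra hne
      exact hdisj' u hu t' ht' hne (v t' (len t'))
        ⟨b, hb.le, by rw [hb1, Q (len t') h.le le_rfl]⟩ ⟨len t', le_rfl, rfl⟩
    rw [hu_eq] at hb hb1
    have : b = len t' := hinj t' b (len t') hb.le le_rfl
      (by rw [hb1, Q (len t') h.le le_rfl])
    omega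
  have hge : len t' ≤ len t := by
    by_contra h
    push_neg at h
    obtain ⟨u, hu, b, hb, hb1, hb2⟩ :=
      (hE (v t' (len t), v t' (len t + 1))).2 ⟨t', ht', len t, h, rfl, rfl⟩
    have hu_eq : u = t := by
      by_contra hne
      exact hdisj u hu t ht hne (v t (len t))
        ⟨b, hb.le, by rw [hb1, ← Q (len t) le_rfl h.le]⟩ ⟨len t, le_rfl, rfl⟩
    rw [hu_eq] at hb hb1
    have : b = len t := hinj t b (len t) hb.le le_rfl
      (by rw [hb1, ← Q (len t) le_rfl h.le])
    omega
  have hlen : len t = len t' := le_antisymm hle hge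
  refine ⟨hlen, fun a => ?_⟩
  rcases le_or_gt a (len t) with h | h
  · exact Q a h (hlen ▸ h)
  · rw [hstable t a h.le, hstable t' a (by omega), Q (len t) le_rfl hle, hlen]


end Helpers

end CI

open CI in
/-- two distinct no-sided-intersection trek systems with the same
monomial force the existence of one with a different monomial. -/
theorem statement13 {n : ℕ} (G : DAG n) (i j : Fin n) (hij : i ≠ j)
    (K : Finset (Fin n)) (hiK : i ∉ K) (hjK : j ∉ K) (hnd : ¬ G.dSep i j K)
    (T T' : Set (Trek G))
    (hT : IsTrekSystem G (insert i K) (insert j K) T)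
    (hT' : IsTrekSystem G (insert i K) (insert j K) T')
    (hN : NoSidedIntersection T) (hN' : NoSidedIntersection T')
    (hne : T ≠ T') (hmon : trekSysMon T = trekSysMon T') :
    ∃ T'' : Set (Trek G), IsTrekSystem G (insert i K) (insert j K) T'' ∧
      NoSidedIntersection T'' ∧ trekSysMon T'' ≠ trekSysMon T := by
  classical
  -- Finiteness of the systems
  have hfin : ∀ (S : Set (Trek G)), Set.BijOn (fun trk => trk.left) S
      ↑(insert i K) → S.Finite := fun S hS =>
    Set.Finite.of_finite_image (by rw [hS.image_eq]; exact (insert i K).finite_toSet)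
      hS.injOn
  have hfT : T.Finite := hfin T hT.1
  have hfT' : T'.Finite := hfin T' hT'.1
  -- Injectivity of tops on an NSI system
  have topinj : ∀ (S : Set (Trek G)),
      (∀ t₁ ∈ S, ∀ t₂ ∈ S, t₁ ≠ t₂ → ∀ x, t₁.L.onPath x → ¬ t₂.L.onPath x) →
      ∀ t₁ ∈ S, ∀ t₂ ∈ S, t₁.top = t₂.top → t₁ = t₂ := by
    intro S hS t₁ h₁ t₂ h₂ htop12
    by_contra hne12
    exact hS t₁ h₁ t₂ h₂ hne12 t₁.top ⟨0, Nat.zero_le _, t₁.L.start_eq⟩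
      ⟨0, Nat.zero_le _, by rw [t₂.L.start_eq, htop12]⟩
  have topinjT := topinj T hN.1
  have topinjT' := topinj T' hN'.1
  -- The trek system monomial as a single monomial
  have hsys : ∀ (S : Set (Trek G)) (hfS : S.Finite) (F : Trek G → Trek G),
      Set.InjOn F S →
      trekSysMon (F '' S) = monomial (∑ t ∈ hfS.toFinset, trekDeg (F t)) (1 : ℝ) := by
    intro S hfS F hinjF
    rw [trekSysMon, finprod_mem_image hinjF,
      finprod_mem_eq_finite_toFinset_prod _ hfS]
    simp_rw [trekMon_eq]
    exact prod_monomial _ _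
  have hsysid : ∀ (S : Set (Trek G)) (hfS : S.Finite),
      trekSysMon S = monomial (∑ t ∈ hfS.toFinset, trekDeg t) (1 : ℝ) := by
    intro S hfS
    have := hsys S hfS id (Function.injective_id.injOn)
    simpa using this
  -- Degree-sum equality from hmon
  have hDeq : (∑ t ∈ hfT.toFinset, trekDeg t) = ∑ t ∈ hfT'.toFinset, trekDeg t := by
    rw [hsysid T hfT, hsysid T' hfT'] at hmon
    rcases (monomial_eq_monomial_iff _ _ _ _).1 hmon with ⟨h, -⟩ | ⟨h, -⟩
    · exact h
    · norm_num at h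
  -- The tops of T and T' coincide
  have hiffdeg : ∀ (F : Finset (Trek G)) (s : Fin n),
      ((∑ t ∈ F, trekDeg t) (Sum.inr s) ≠ 0 ↔ ∃ t ∈ F, t.top = s) := by
    intro F s
    rw [Finsupp.finset_sum_apply, Ne, Finset.sum_eq_zero_iff]
    push_neg
    simp [trekDeg_inr]
  have htops : ∀ s : Fin n, (∃ t ∈ T, t.top = s) ↔ (∃ t' ∈ T', t'.top = s) := by
    intro s
    have h1 := hiffdeg hfT.toFinset s
    have h2 := hiffdeg hfT'.toFinset s
    rw [hDeq] at h1
    simp only [Set.Finite.mem_toFinset] at h1 h2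
    rw [← h1, ← h2]
  -- Pairing of treks by tops
  have hex : ∀ t : Trek G, ∃ t', t ∈ T → (t' ∈ T' ∧ t'.top = t.top) := by
    intro t
    by_cases h : t ∈ T
    · obtain ⟨t', ht', htopt⟩ := (htops t.top).1 ⟨t, h, rfl⟩
      exact ⟨t', fun _ => ⟨ht', htopt⟩⟩
    · exact ⟨t, fun h' => absurd h' h⟩
  choose f hf using hex
  have hfinj : ∀ t₁ ∈ T, ∀ t₂ ∈ T, f t₁ = f t₂ → t₁ = t₂ := fun t₁ h₁ t₂ h₂ h =>
    topinjT t₁ h₁ t₂ h₂ (by rw [← (hf t₁ h₁).2, ← (hf t₂ h₂).2, h])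
  have hfsurj : ∀ t' ∈ T', ∃ t ∈ T, f t = t' := by
    intro t' ht'
    obtain ⟨t, htm, htopt⟩ := (htops t'.top).2 ⟨t', ht', rfl⟩
    exact ⟨t, htm, topinjT' (f t) (hf t htm).1 t' ht'
      (by rw [(hf t htm).2, htopt])⟩
  -- The mixed system
  set g : Trek G → Trek G := fun t =>
    if h : (f t).top = t.top then t.mix (f t) h else t with hgdef0
  have hgdef : ∀ t (ht : t ∈ T), g t = t.mix (f t) ((hf t ht).2) := by
    intro t ht
    simp only [hgdef0, dif_pos ((hf t ht).2)]
  have hgLon : ∀ t ∈ T, ∀ x, ((g t).L.onPath x ↔ t.L.onPath x) := by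
    intro t ht x; rw [hgdef t ht]; exact Iff.rfl
  have hgleft : ∀ t ∈ T, (g t).left = t.left := by
    intro t ht; rw [hgdef t ht]; rfl
  have hgright : ∀ t ∈ T, (g t).right = (f t).right := by
    intro t ht; rw [hgdef t ht]; rfl
  have hgRon : ∀ t ∈ T, ∀ x, ((g t).R.onPath x ↔ (f t).R.onPath x) := by
    intro t ht x; rw [hgdef t ht]; exact Iff.rfl
  have hginj : Set.InjOn g T := by
    intro t₁ h₁ t₂ h₂ h
    exact hT.1.injOn h₁ h₂ (by
      show t₁.left = t₂.left
      rw [← hgleft t₁ h₁, ← hgleft t₂ h₂, h])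
  refine ⟨g '' T, ⟨⟨?_, ?_, ?_⟩, ⟨?_, ?_, ?_⟩⟩, ⟨?_, ?_⟩, ?_⟩
  · rintro w ⟨t, ht, rfl⟩
    show (g t).left ∈ _
    rw [hgleft t ht]
    exact hT.1.mapsTo ht
  · rintro w₁ ⟨t₁, h₁, rfl⟩ w₂ ⟨t₂, h₂, rfl⟩ hlw
    have : t₁ = t₂ := hT.1.injOn h₁ h₂ (by
      show t₁.left = t₂.left
      rw [← hgleft t₁ h₁, ← hgleft t₂ h₂]; exact hlw)
    rw [this]
  · intro a ha
    obtain ⟨t, ht, hta⟩ := hT.1.surjOn ha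
    exact ⟨g t, ⟨t, ht, rfl⟩, by rw [← hta]; exact hgleft t ht⟩
  · rintro w ⟨t, ht, rfl⟩
    show (g t).right ∈ _
    rw [hgright t ht]
    exact hT'.2.mapsTo (hf t ht).1
  · rintro w₁ ⟨t₁, h₁, rfl⟩ w₂ ⟨t₂, h₂, rfl⟩ hrw
    have hff : f t₁ = f t₂ := hT'.2.injOn (hf t₁ h₁).1 (hf t₂ h₂).1 (by
      show (f t₁).right = (f t₂).right
      rw [← hgright t₁ h₁, ← hgright t₂ h₂]; exact hrw)
    rw [hfinj t₁ h₁ t₂ h₂ hff]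
  · intro b hb
    obtain ⟨t', ht', htb⟩ := hT'.2.surjOn hb
    obtain ⟨t, ht, hft⟩ := hfsurj t' ht'
    exact ⟨g t, ⟨t, ht, rfl⟩, by show (g t).right = b; rw [hgright t ht, hft]; exact htb⟩
  · rintro w₁ ⟨t₁, h₁, rfl⟩ w₂ ⟨t₂, h₂, rfl⟩ hne12 x hx1
    have ht12 : t₁ ≠ t₂ := fun h => hne12 (by rw [h])
    rw [hgLon t₁ h₁] at hx1
    rw [hgLon t₂ h₂]
    exact hN.1 t₁ h₁ t₂ h₂ ht12 x hx1
  · rintro w₁ ⟨t₁, h₁, rfl⟩ w₂ ⟨t₂, h₂, rfl⟩ hne12 x hx1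
    have ht12 : t₁ ≠ t₂ := fun h => hne12 (by rw [h])
    have hff : f t₁ ≠ f t₂ := fun h => ht12 (hfinj t₁ h₁ t₂ h₂ h)
    rw [hgRon t₁ h₁] at hx1
    rw [hgRon t₂ h₂]
    exact hN'.2 (f t₁) (hf t₁ h₁).1 (f t₂) (hf t₂ h₂).1 hff x hx1
  · -- the monomial is different, else `T = T'`
    -- Otherwise `T = T'`, contradiction.
    intro hc
    exfalso
    rw [hsys T hfT g hginj, hsysid T hfT] at hc
    have hD2 : (∑ t ∈ hfT.toFinset, trekDeg (g t)) = ∑ t ∈ hfT.toFinset, trekDeg t := by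
      rcases (monomial_eq_monomial_iff _ _ _ _).1 hc with ⟨h, -⟩ | ⟨h, -⟩
      · exact h
      · norm_num at h
    -- right-edge counts agree
    have hRsum : ∀ e : Fin n × Fin n,
        (∑ t ∈ hfT'.toFinset, pathDeg t.R (Sum.inl e)) =
          ∑ t ∈ hfT.toFinset, pathDeg t.R (Sum.inl e) := by
      intro e
      have h1 := DFunLike.congr_fun hD2 (Sum.inl e)
      rw [Finsupp.finset_sum_apply, Finsupp.finset_sum_apply] at h1
      have hterm : ∀ t ∈ hfT.toFinset, trekDeg (g t) (Sum.inl e) =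
          pathDeg t.L (Sum.inl e) + pathDeg (f t).R (Sum.inl e) := by
        intro t ht
        rw [hgdef t (hfT.mem_toFinset.1 ht), trekDeg_mix]
        simp [Finsupp.single_apply]
      rw [Finset.sum_congr rfl hterm,
        Finset.sum_congr rfl (fun t _ => trekDeg_inl t e)] at h1
      rw [Finset.sum_add_distrib, Finset.sum_add_distrib] at h1
      have h2 : ∑ t ∈ hfT.toFinset, pathDeg (f t).R (Sum.inl e) =
          ∑ t' ∈ hfT'.toFinset, pathDeg t'.R (Sum.inl e) := by
        apply Finset.sum_bij (fun t _ => f t)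
        · intro t ht
          exact hfT'.mem_toFinset.2 (hf t (hfT.mem_toFinset.1 ht)).1
        · intro t1 h1' t2 h2' hh
          exact hfinj t1 (hfT.mem_toFinset.1 h1') t2 (hfT.mem_toFinset.1 h2') hh
        · intro t' ht'
          obtain ⟨t, htm, hft⟩ := hfsurj t' (hfT'.mem_toFinset.1 ht')
          exact ⟨t, hfT.mem_toFinset.2 htm, hft⟩
        · intro t ht; rfl
      omega
    -- left-edge counts agree
    have hLsum : ∀ e : Fin n × Fin n,
        (∑ t ∈ hfT'.toFinset, pathDeg t.L (Sum.inl e)) =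
          ∑ t ∈ hfT.toFinset, pathDeg t.L (Sum.inl e) := by
      intro e
      have h1 := DFunLike.congr_fun hDeq (Sum.inl e)
      rw [Finsupp.finset_sum_apply, Finsupp.finset_sum_apply] at h1
      rw [Finset.sum_congr rfl (fun t _ => trekDeg_inl t e),
        Finset.sum_congr rfl (fun t _ => trekDeg_inl t e)] at h1
      rw [Finset.sum_add_distrib, Finset.sum_add_distrib] at h1
      have h2 := hRsum e
      omega
    -- edge membership equivalences
    have hmemR : ∀ e : Fin n × Fin n,
        ((∃ u ∈ T, u.R.hasEdge e) ↔ (∃ u ∈ T', u.R.hasEdge e)) := by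
      intro e
      have k1 : (∑ t ∈ hfT.toFinset, pathDeg t.R (Sum.inl e)) ≠ 0 ↔
          ∃ u ∈ T, u.R.hasEdge e := by
        rw [Ne, Finset.sum_eq_zero_iff]
        push_neg
        constructor
        · rintro ⟨t, ht, hne0⟩
          exact ⟨t, hfT.mem_toFinset.1 ht, (pathDeg_inl_ne_zero _ _).1 hne0⟩
        · rintro ⟨t, ht, he⟩
          exact ⟨t, hfT.mem_toFinset.2 ht, (pathDeg_inl_ne_zero _ _).2 he⟩
      have k2 : (∑ t ∈ hfT'.toFinset, pathDeg t.R (Sum.inl e)) ≠ 0 ↔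
          ∃ u ∈ T', u.R.hasEdge e := by
        rw [Ne, Finset.sum_eq_zero_iff]
        push_neg
        constructor
        · rintro ⟨t, ht, hne0⟩
          exact ⟨t, hfT'.mem_toFinset.1 ht, (pathDeg_inl_ne_zero _ _).1 hne0⟩
        · rintro ⟨t, ht, he⟩
          exact ⟨t, hfT'.mem_toFinset.2 ht, (pathDeg_inl_ne_zero _ _).2 he⟩
      rw [← k1, ← k2, hRsum e]
    have hmemL : ∀ e : Fin n × Fin n,
        ((∃ u ∈ T, u.L.hasEdge e) ↔ (∃ u ∈ T', u.L.hasEdge e)) := by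
      intro e
      have k1 : (∑ t ∈ hfT.toFinset, pathDeg t.L (Sum.inl e)) ≠ 0 ↔
          ∃ u ∈ T, u.L.hasEdge e := by
        rw [Ne, Finset.sum_eq_zero_iff]
        push_neg
        constructor
        · rintro ⟨t, ht, hne0⟩
          exact ⟨t, hfT.mem_toFinset.1 ht, (pathDeg_inl_ne_zero _ _).1 hne0⟩
        · rintro ⟨t, ht, he⟩
          exact ⟨t, hfT.mem_toFinset.2 ht, (pathDeg_inl_ne_zero _ _).2 he⟩
      have k2 : (∑ t ∈ hfT'.toFinset, pathDeg t.L (Sum.inl e)) ≠ 0 ↔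
          ∃ u ∈ T', u.L.hasEdge e := by
        rw [Ne, Finset.sum_eq_zero_iff]
        push_neg
        constructor
        · rintro ⟨t, ht, hne0⟩
          exact ⟨t, hfT'.mem_toFinset.1 ht, (pathDeg_inl_ne_zero _ _).1 hne0⟩
        · rintro ⟨t, ht, he⟩
          exact ⟨t, hfT'.mem_toFinset.2 ht, (pathDeg_inl_ne_zero _ _).2 he⟩
      rw [← k1, ← k2, hLsum e]
    -- rigidity: each trek of T equals its partner in T'
    have rigR : ∀ t ∈ T, t.R.len = (f t).R.len ∧ ∀ a, t.R.v a = (f t).R.v a := by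
      intro t ht
      exact rig T T' Trek.top (fun u => u.R.len) (fun u => u.R.v)
        (fun u => u.R.start_eq) (fun u => u.R.inj) (fun u => u.R.stable)
        hN.2 hN'.2 hmemR ht (hf t ht).1 ((hf t ht).2).symm
    have rigL : ∀ t ∈ T, t.L.len = (f t).L.len ∧ ∀ a, t.L.v a = (f t).L.v a := by
      intro t ht
      exact rig T T' Trek.top (fun u => u.L.len) (fun u => u.L.v)
        (fun u => u.L.start_eq) (fun u => u.L.inj) (fun u => u.L.stable)
        hN.1 hN'.1 hmemL ht (hf t ht).1 ((hf t ht).2).symm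
    have key : ∀ t ∈ T, t = f t := fun t ht =>
      Trek.ext' ((hf t ht).2).symm (rigL t ht).1 (funext (rigL t ht).2)
        (rigR t ht).1 (funext (rigR t ht).2)
    apply hne
    apply Set.Subset.antisymm
    · intro t ht
      have h' := (hf t ht).1
      rw [← key t ht] at h'
      exact h'
    · intro t' ht'
      obtain ⟨t, ht, hft⟩ := hfsurj t' ht'
      rw [← hft, ← key t ht]
      exact ht
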